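/- With A(f) defined as {x : ∃ L ∈ ℕ, ∀ n ∈ ℕ, f^{n+L}(x) ∉ T(f^n(B(0,R)))} for a continuous open map f satisfying the covering property (1a), we have A(f^p) = A(f) for every p ∈ ℕ, p ≥ 1. -/

import Mathlib

open Set Metric Filter Bornology Topology

noncomputable section

/-- The topological hull `T(E)`: the union of `E` with all bounded connected
components of its complement. -/
def topHull {m : ℕ} (E : Set (EuclideanSpace ℝ (Fin m))) : Set (EuclideanSpace ℝ (Fin m)) :=
  E ∪ {x | IsBounded (connectedComponentIn Eᶜ x)}

/-- The covering property (1a): for each `R > R₀` there exist `r_n → ∞` with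
`B(0, r_n) ⊆ T(f^n(B(0,R)))`. -/
def CoveringProperty {m : ℕ} (f : EuclideanSpace ℝ (Fin m) → EuclideanSpace ℝ (Fin m))
    (R₀ : ℝ) : Prop :=
  ∀ R > R₀, ∃ r : ℕ → ℝ, Tendsto r atTop atTop ∧
    ∀ n : ℕ, ball (0 : EuclideanSpace ℝ (Fin m)) (r n) ⊆ topHull (f^[n] '' ball 0 R)

/-- The fast escaping set defined via radius `R`:
`A(f) = {x : ∃ L, ∀ n, f^{n+L}(x) ∉ T(f^n(B(0,R)))}`. -/
def fastEscaping {m : ℕ} (f : EuclideanSpace ℝ (Fin m) → EuclideanSpace ℝ (Fin m))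
    (R : ℝ) : Set (EuclideanSpace ℝ (Fin m)) :=
  {x | ∃ L : ℕ, ∀ n : ℕ, f^[n + L] x ∉ topHull (f^[n] '' ball (0 : EuclideanSpace ℝ (Fin m)) R)}


/-! For a continuous open map `f` and an open set `E` we have `f (T E) ⊆ T (f E)`: a bounded
component of `Eᶜ` is enclosed by a bounded open set `U` with `∂U ⊆ E`, and then `f U` is a bounded
open set with `∂(f U) ⊆ f (∂U) ⊆ f E`, so it traps the component of `f x` in `(f E)ᶜ`.
With `Tₙ = T (fⁿ (B(0,R)))` this gives `fʲ (Tₙ) ⊆ Tₙ₊ⱼ`, whence `A(f^p) ⊆ A(f)`; combined with the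
covering property, `B(0,R) ⊆ Tₖ` for all large `k`, it also gives `Tₙ ⊆ Tₙ₊ₖ`, whence
`A(f) ⊆ A(f^p)`. Both inclusions only shift the index `L`. -/

open Function

section Topology

variable {X Y : Type*} [TopologicalSpace X] [TopologicalSpace Y]

theorem IsOpenMap.iterate {f : X → X} (hf : IsOpenMap f) : ∀ n, IsOpenMap f^[n]
  | 0 => IsOpenMap.id
  | n + 1 => by rw [iterate_succ]; exact (hf.iterate n).comp hf

theorem IsOpenMap.frontier_image_subset [T2Space Y] {f : X → Y} (hf : Continuous f)
    (ho : IsOpenMap f) {U : Set X} (hU : IsOpen U) (hUc : IsCompact (closure U)) :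
    frontier (f '' U) ⊆ f '' frontier U := by
  rw [(ho U hU).frontier_eq, hU.frontier_eq, ← image_closure_of_isCompact hUc hf.continuousOn]
  rintro _ ⟨⟨x, hx, rfl⟩, hxU⟩
  exact ⟨x, ⟨hx, fun h => hxU ⟨x, h, rfl⟩⟩, rfl⟩

theorem IsPreconnected.subset_of_disjoint_frontier {s u : Set X} (hs : IsPreconnected s)
    (hu : IsOpen u) (hsu : (s ∩ u).Nonempty) (hfr : Disjoint s (frontier u)) : s ⊆ u :=
  hs.subset_of_closure_inter_subset hu hsu fun y ⟨hyc, hys⟩ => by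
    by_contra hyu
    exact disjoint_left.1 hfr hys (hu.frontier_eq ▸ ⟨hyc, hyu⟩)

theorem exists_isClopen_connectedComponent_subset [T2Space X] [CompactSpace X] {x : X}
    {U : Set X} (hU : IsOpen U) (h : connectedComponent x ⊆ U) :
    ∃ V, IsClopen V ∧ connectedComponent x ⊆ V ∧ V ⊆ U := by
  rw [connectedComponent_eq_iInter_isClopen] at h
  obtain ⟨t, ht⟩ := hU.isClosed_compl.isCompact.elim_finite_subfamily_closed
    (fun s : {s : Set X // IsClopen s ∧ x ∈ s} => (s : Set X)) (fun s => s.2.1.1)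
    (by rwa [← disjoint_iff_inter_eq_empty, disjoint_compl_left_iff_subset])
  refine ⟨⋂ s ∈ t, (s : Set X), isClopen_biInter_finset fun s _ => s.2.1,
    subset_iInter₂ fun s _ => s.2.1.connectedComponent_subset s.2.2, ?_⟩
  rwa [← disjoint_iff_inter_eq_empty, disjoint_compl_left_iff_subset] at ht

end Topology

theorem exists_isOpen_isBounded_connectedComponentIn_subset_frontier_subset {X : Type*}
    [MetricSpace X] [ProperSpace X] {E : Set X} (hE : IsOpen E) {x : X} (hx : x ∉ E)
    (hb : IsBounded (connectedComponentIn Eᶜ x)) :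
    ∃ U, IsOpen U ∧ IsBounded U ∧ connectedComponentIn Eᶜ x ⊆ U ∧ frontier U ⊆ E := by
  set C := connectedComponentIn Eᶜ x
  obtain ⟨ρ, hCρ⟩ := hb.subset_ball x
  set K := Eᶜ ∩ closedBall x ρ
  have hK : IsClosed K := hE.isClosed_compl.inter isClosed_closedBall
  have : CompactSpace K := isCompact_iff_compactSpace.1 ((isCompact_closedBall x ρ).inter_left
    hE.isClosed_compl)
  have hxK : x ∈ K := ⟨hx, ball_subset_closedBall (hCρ (mem_connectedComponentIn hx))⟩
  have hCK : C = (↑) '' connectedComponent (⟨x, hxK⟩ : ↥K) := by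
    have hCsub : C ⊆ K := subset_inter (connectedComponentIn_subset _ _)
      (hCρ.trans ball_subset_closedBall)
    rw [← connectedComponentIn_eq_image hxK]
    exact (isPreconnected_connectedComponentIn.subset_connectedComponentIn
      (mem_connectedComponentIn hx) hCsub).antisymm (connectedComponentIn_mono x inter_subset_left)
  -- The component of `x` in the compact set `K` is cut out of `K` by a clopen set `V'` which
  -- stays inside the open ball; `V'` and its complement in `K` are then separated in `X`.
  obtain ⟨V', hV', hCV', hV'ρ⟩ := exists_isClopen_connectedComponent_subset
    (isOpen_ball.preimage continuous_subtype_val) (x := (⟨x, hxK⟩ : ↥K))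
    fun y hy => hCρ (hCK ▸ mem_image_of_mem _ hy)
  obtain ⟨O, O', hO, hO', hVO, hWO', hOO'⟩ := normal_separation
    (hK.isClosedEmbedding_subtypeVal.isClosedMap _ hV'.isClosed)
    (hK.isClosedEmbedding_subtypeVal.isClosedMap _ hV'.compl.isClosed)
    (disjoint_image_of_injective Subtype.val_injective disjoint_compl_right)
  have hCV : C ⊆ (↑) '' V' := by rw [hCK]; exact image_mono hCV'
  have hU : IsOpen (O ∩ ball x ρ) := hO.inter isOpen_ball
  refine ⟨O ∩ ball x ρ, hU, isBounded_ball.subset inter_subset_right,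
    subset_inter (hCV.trans hVO) hCρ, fun y hy => ?_⟩
  by_contra hyE
  obtain ⟨hyO, hyρ⟩ := closure_inter_subset hy.1
  have hyK : y ∈ K := ⟨hyE, closure_ball_subset_closedBall hyρ⟩
  rw [hU.frontier_eq] at hy
  by_cases hyV' : (⟨y, hyK⟩ : ↥K) ∈ V'
  · exact hy.2 ⟨hVO ⟨_, hyV', rfl⟩, hV'ρ hyV'⟩
  · exact disjoint_left.1 (hOO'.closure_left hO') hyO (hWO' ⟨_, hyV', rfl⟩)

section TopHull

variable {m : ℕ}

theorem subset_topHull (E : Set (EuclideanSpace ℝ (Fin m))) : E ⊆ topHull E :=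
  subset_union_left

theorem topHull_mono {E F : Set (EuclideanSpace ℝ (Fin m))} (h : E ⊆ F) :
    topHull E ⊆ topHull F := by
  rintro x (hx | (hx : IsBounded (connectedComponentIn Eᶜ x)))
  · exact Or.inl (h hx)
  · by_cases hxF : x ∈ F
    · exact Or.inl hxF
    · exact Or.inr (hx.subset (connectedComponentIn_mono x (compl_subset_compl.2 h)))

theorem topHull_topHull (E : Set (EuclideanSpace ℝ (Fin m))) : topHull (topHull E) = topHull E := by
  refine (subset_topHull _).antisymm' fun x hx => ?_
  by_contra hxE
  rcases hx with hx | (hx : IsBounded (connectedComponentIn (topHull E)ᶜ x))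
  · exact hxE hx
  have hxC : x ∈ Eᶜ := fun h => hxE (Or.inl h)
  have hunb : ¬IsBounded (connectedComponentIn Eᶜ x) := fun h => hxE (Or.inr h)
  -- Every point of an unbounded component of `Eᶜ` has that same component, so lies outside `T(E)`.
  have hC : connectedComponentIn Eᶜ x ⊆ (topHull E)ᶜ := by
    rintro y hy (hyE | hyb)
    · exact connectedComponentIn_subset _ _ hy hyE
    · exact hunb (by rwa [connectedComponentIn_eq hy])
  exact hunb (hx.subset (isPreconnected_connectedComponentIn.subset_connectedComponentIn
    (mem_connectedComponentIn hxC) hC))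

theorem image_topHull_subset {f : EuclideanSpace ℝ (Fin m) → EuclideanSpace ℝ (Fin m)}
    (hf : Continuous f) (ho : IsOpenMap f) {E : Set (EuclideanSpace ℝ (Fin m))}
    (hE : IsOpen E) : f '' topHull E ⊆ topHull (f '' E) := by
  rintro _ ⟨x, hx | hx, rfl⟩
  · exact Or.inl (mem_image_of_mem f hx)
  by_cases hxE : x ∈ E
  · exact Or.inl (mem_image_of_mem f hxE)
  by_cases hfx : f x ∈ f '' E
  · exact Or.inl hfx
  obtain ⟨U, hUo, hUb, hCU, hUE⟩ :=
    exists_isOpen_isBounded_connectedComponentIn_subset_frontier_subset hE hxE hx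
  have hfU : frontier (f '' U) ⊆ f '' E :=
    (ho.frontier_image_subset hf hUo hUb.isCompact_closure).trans (image_mono hUE)
  have hDU : connectedComponentIn (f '' E)ᶜ (f x) ⊆ f '' U :=
    isPreconnected_connectedComponentIn.subset_of_disjoint_frontier (ho U hUo)
      ⟨f x, mem_connectedComponentIn hfx, mem_image_of_mem f (hCU (mem_connectedComponentIn hxE))⟩
      ((disjoint_compl_left.mono_right hfU).mono_left (connectedComponentIn_subset _ _))
  exact Or.inr ((hUb.isCompact_closure.image hf).isBounded.subset
    (hDU.trans (image_mono subset_closure)))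

theorem image_iterate_topHull_subset {f : EuclideanSpace ℝ (Fin m) → EuclideanSpace ℝ (Fin m)}
    (hf : Continuous f) (ho : IsOpenMap f) {E : Set (EuclideanSpace ℝ (Fin m))}
    (hE : IsOpen E) : ∀ j, f^[j] '' topHull E ⊆ topHull (f^[j] '' E)
  | 0 => by simp
  | j + 1 => by
    rw [iterate_succ', image_comp, image_comp]
    exact (image_mono (image_iterate_topHull_subset hf ho hE j)).trans
      (image_topHull_subset hf ho (ho.iterate j E hE))

end TopHull

section FastEscaping

variable {m : ℕ} {f : EuclideanSpace ℝ (Fin m) → EuclideanSpace ℝ (Fin m)}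

theorem iterate_mem_topHull_image_iterate (hf : Continuous f) (ho : IsOpenMap f)
    {B : Set (EuclideanSpace ℝ (Fin m))} (hB : IsOpen B) {n : ℕ} {y : EuclideanSpace ℝ (Fin m)}
    (hy : y ∈ topHull (f^[n] '' B)) (j : ℕ) : f^[j] y ∈ topHull (f^[j + n] '' B) := by
  rw [iterate_add, image_comp]
  exact image_iterate_topHull_subset hf ho (ho.iterate n B hB) j (mem_image_of_mem _ hy)

theorem topHull_image_iterate_subset_of_subset (hf : Continuous f) (ho : IsOpenMap f)
    {B : Set (EuclideanSpace ℝ (Fin m))} (hB : IsOpen B) {k : ℕ} (hk : B ⊆ topHull (f^[k] '' B))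
    (a : ℕ) : topHull (f^[a] '' B) ⊆ topHull (f^[a + k] '' B) := by
  refine (topHull_mono ?_).trans (topHull_topHull _).subset
  rintro _ ⟨y, hy, rfl⟩
  exact iterate_mem_topHull_image_iterate hf ho hB (hk hy) a

theorem CoveringProperty.eventually_ball_subset_topHull {R₀ R : ℝ} (hcov : CoveringProperty f R₀)
    (hR : R₀ < R) :
    ∀ᶠ k in atTop, ball (0 : EuclideanSpace ℝ (Fin m)) R ⊆ topHull (f^[k] '' ball 0 R) := by
  obtain ⟨r, hr, hrR⟩ := hcov R hR
  filter_upwards [hr.eventually_ge_atTop R] with k hk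
  exact (ball_subset_ball hk).trans (hrR k)

theorem fastEscaping_iterate_subset (hf : Continuous f) (ho : IsOpenMap f) (R : ℝ) {p : ℕ}
    (hp : 1 ≤ p) : fastEscaping (f^[p]) R ⊆ fastEscaping f R := by
  obtain ⟨q, rfl⟩ : ∃ q, p = q + 1 := ⟨p - 1, by omega⟩
  rintro x ⟨L, hL⟩
  refine ⟨(q + 1) * L, fun n hn => hL n ?_⟩
  have h := iterate_mem_topHull_image_iterate hf ho isOpen_ball hn (q * n)
  rwa [← iterate_add_apply, show q * n + (n + (q + 1) * L) = (q + 1) * (n + L) by ring,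
    show q * n + n = (q + 1) * n by ring, iterate_mul, iterate_mul] at h

theorem fastEscaping_subset_fastEscaping_iterate (hf : Continuous f) (ho : IsOpenMap f)
    {R₀ R : ℝ} (hcov : CoveringProperty f R₀) (hR : R₀ < R) {p : ℕ} (hp : 1 ≤ p) :
    fastEscaping f R ⊆ fastEscaping (f^[p]) R := by
  obtain ⟨q, rfl⟩ : ∃ q, p = q + 1 := ⟨p - 1, by omega⟩
  obtain ⟨N, hN⟩ := (hcov.eventually_ball_subset_topHull hR).exists_forall_of_atTop
  rintro x ⟨L, hL⟩
  refine ⟨L + N, fun n hn => hL ((q + 1) * n + (q * (L + N) + N)) ?_⟩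
  rw [← iterate_mul, ← iterate_mul] at hn
  have h := topHull_image_iterate_subset_of_subset hf ho isOpen_ball
    (hN (q * (L + N) + N) (Nat.le_add_left N _)) _ hn
  rwa [show (q + 1) * n + (q * (L + N) + N) + L = (q + 1) * (n + (L + N)) by ring]

end FastEscaping

theorem fastEscaping_iterate {m : ℕ}
    (f : EuclideanSpace ℝ (Fin m) → EuclideanSpace ℝ (Fin m))
    (hf : Continuous f) (hopen : IsOpenMap f)
    (R₀ : ℝ) (hcov : CoveringProperty f R₀)
    (R : ℝ) (hR : R₀ < R) (p : ℕ) (hp : 1 ≤ p) :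
    fastEscaping (f^[p]) R = fastEscaping f R :=
  (fastEscaping_iterate_subset hf hopen R hp).antisymm
    (fastEscaping_subset_fastEscaping_iterate hf hopen hcov hR hp)
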